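/- For every finite contiguous block S of the Thue–Morse word of odd length, the numbers of A's and of B's in S differ by exactly 1: for all natural numbers a and n with n odd, |#{i : a ≤ i < a + n and t(i) = 0} − #{i : a ≤ i < a + n and t(i) = 1}| = 1. -/

import Mathlib

open Fin.NatCast in
/-- The Thue–Morse sequence: `t n` is the parity of the number of `1` digits
in the binary expansion of `n` (so `t 0 = 0`, `t (2n) = t n`, `t (2n+1) = 1 - t n`). -/
def thueMorse (n : ℕ) : Fin 2 := ((Nat.digits 2 n).sum : Fin 2)

/-!
Weight each position `i` by `+1` if `t i = 0` and by `-1` if `t i = 1`; the discrepancy of a block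
is the sum of these weights. Since `t (2j+1) ≠ t (2j)`, the weights of every aligned pair
`{2j, 2j+1}` cancel. A block of odd length is an aligned block of even length plus one extra
position (at its end if it starts at an even index, at its start otherwise), so its weight sum is
a single weight, which is `±1`.
-/

open Finset

section PairCancellation

variable {M : Type*} [AddCommMonoid M] {f : ℕ → M}

theorem sum_Ico_two_mul_eq_zero (hf : ∀ j, f (2 * j) + f (2 * j + 1) = 0) (k m : ℕ) :
    ∑ i ∈ Ico (2 * k) (2 * k + 2 * m), f i = 0 := by
  induction m with
  | zero => simp
  | succ m ih =>
    rw [show 2 * k + 2 * (m + 1) = 2 * (k + m) + 1 + 1 by ring,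
      sum_Ico_succ_top (by omega), sum_Ico_succ_top (by omega), add_assoc, hf,
      show 2 * (k + m) = 2 * k + 2 * m by ring, ih, add_zero]

theorem exists_sum_Ico_eq_of_odd (hf : ∀ j, f (2 * j) + f (2 * j + 1) = 0) (a : ℕ) {n : ℕ}
    (hn : Odd n) : ∃ i, ∑ j ∈ Ico a (a + n), f j = f i := by
  obtain ⟨m, rfl⟩ := hn
  rcases Nat.even_or_odd' a with ⟨k, rfl | rfl⟩
  · refine ⟨2 * k + 2 * m, ?_⟩
    rw [← add_assoc, sum_Ico_succ_top (by omega), sum_Ico_two_mul_eq_zero hf, zero_add]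
  · refine ⟨2 * k + 1, ?_⟩
    rw [show 2 * k + 1 + (2 * m + 1) = 2 * (k + 1) + 2 * m by ring,
      sum_eq_sum_Ico_succ_bot (by omega), show 2 * k + 1 + 1 = 2 * (k + 1) by ring,
      sum_Ico_two_mul_eq_zero hf, add_zero]

end PairCancellation

theorem thueMorse_two_mul (n : ℕ) : thueMorse (2 * n) = thueMorse n := by
  rcases eq_or_ne n 0 with rfl | hn
  · rfl
  · have hdigits := Nat.digits_add 2 one_lt_two 0 n two_pos (Or.inr hn)
    rw [zero_add] at hdigits
    simp [thueMorse, hdigits]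

open Fin.NatCast in
theorem thueMorse_two_mul_add_one (n : ℕ) : thueMorse (2 * n + 1) = thueMorse n + 1 := by
  have hdigits := Nat.digits_add 2 one_lt_two 1 n one_lt_two (Or.inl one_ne_zero)
  rw [add_comm] at hdigits
  rw [thueMorse, thueMorse, hdigits, List.sum_cons, Nat.cast_add, Nat.cast_one, add_comm]

def thueMorseSign (i : ℕ) : ℤ := if thueMorse i = 0 then 1 else -1

theorem abs_thueMorseSign (i : ℕ) : |thueMorseSign i| = 1 := by
  unfold thueMorseSign
  split <;> simp

theorem thueMorseSign_two_mul_add_thueMorseSign_two_mul_add_one (j : ℕ) :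
    thueMorseSign (2 * j) + thueMorseSign (2 * j + 1) = 0 := by
  simp only [thueMorseSign, thueMorse_two_mul, thueMorse_two_mul_add_one]
  generalize thueMorse j = x
  fin_cases x <;> decide

theorem card_filter_thueMorse_sub_card_filter (s : Finset ℕ) :
    ((s.filter fun i => thueMorse i = 0).card : ℤ) - ((s.filter fun i => thueMorse i = 1).card : ℤ)
      = ∑ i ∈ s, thueMorseSign i := by
  simp only [natCast_card_filter, ← sum_sub_distrib]
  refine sum_congr rfl fun i _ => ?_
  simp only [thueMorseSign]
  generalize thueMorse i = x
  fin_cases x <;> decide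

/-- In any finite contiguous block of odd length of the Thue–Morse word, the
numbers of `A`'s (`t i = 0`) and of `B`'s (`t i = 1`) differ by exactly `1`. -/
theorem thueMorse_odd_block_discrepancy_eq_one (a n : ℕ) (hn : Odd n) :
    |((((Finset.Ico a (a + n)).filter fun i => thueMorse i = 0).card : ℤ) -
        (((Finset.Ico a (a + n)).filter fun i => thueMorse i = 1).card : ℤ))| = 1 := by
  obtain ⟨i, hi⟩ := exists_sum_Ico_eq_of_odd
    thueMorseSign_two_mul_add_thueMorseSign_two_mul_add_one a hn
  rw [card_filter_thueMorse_sub_card_filter, hi, abs_thueMorseSign]
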